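/- Let ψ_n and ψ_n' be two sequences of m×m stochastic matrices satisfying the same recursion ψ_{n+1} = (I - R_n - Q_n ψ_n)^{-1} P_n with arbitrary stochastic initial conditions ψ_1, ψ_1', where each triple (P_n, Q_n, R_n) consists of nonnegative matrices with (P_n+Q_n+R_n)·1 = 1 and satisfies: ‖R_n^l‖ ≤ 1-ε and all entries of (I-R_n)^{-1}P_n and (I-R_n)^{-1}Q_n are at least ε. Then there exist constants C₁ and 0 ≤ c₀ < 1, depending only on ε, l, m, such that ‖ψ_{n+1} - ψ_{n+1}'‖ ≤ 2C₁ c₀^n for all n. -/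

import Mathlib

/-!
Let `φ` be the solution of the recursion with `φ₁ = 0`. For any stochastic solution `χ`, the
resolvent identity gives `χₙ₊₁ - φₙ₊₁ = Bₙ (χₙ - φₙ) φₙ₊₁` with `Bₙ ≥ 0`, hence
`χₙ₊₁ - φₙ₊₁ = N (φ₂ ⋯ φₙ₊₁)` with `N ≥ 0`. The `φₖ` (`k ≥ 2`) have entries in `[ε, 1]`, so by
Birkhoff's contraction the ratios between two rows of `φ₂ ⋯ φₙ₊₁` become constant up to
`O((1 - ε²)ⁿ)`. Since `0 ≤ χₙ₊₁ - φₙ₊₁ ≤ 1` and its row sums `1 - φₙ₊₁ 1` do not depend on `χ`,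
this determines `χₙ₊₁ - φₙ₊₁` up to the same error, for `ψ` and `ψ'` alike.
-/

open Matrix BigOperators

noncomputable def rowNorm {m : ℕ} (A : Matrix (Fin m) (Fin m) ℝ) : ℝ :=
  ⨆ i, ∑ j, |A i j|

def IsStochastic {m : ℕ} (S : Matrix (Fin m) (Fin m) ℝ) : Prop :=
  (∀ i j, 0 ≤ S i j) ∧ ∀ i, ∑ j, S i j = 1

attribute [local instance] Matrix.linftyOpNormedRing Matrix.linftyOpNormedAlgebra

namespace MatrixRecursion

lemma sum_mul_sub_sum_mul_le {ι : Type*} [Fintype ι] {x p q : ι → ℝ} {δ w : ℝ}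
    (hx : ∀ t t', x t - x t' ≤ w) (hp : ∀ t, δ ≤ p t) (hq : ∀ t, δ ≤ q t)
    (hp1 : ∑ t, p t = 1) (hq1 : ∑ t, q t = 1) :
    ∑ t, p t * x t - ∑ t, q t * x t ≤ (1 - Fintype.card ι * δ) * w := by
  have : Nonempty ι := by
    by_contra hι
    simp [not_nonempty_iff.mp hι] at hp1
  obtain ⟨t₁, ht₁⟩ := Finite.exists_max x
  obtain ⟨t₀, ht₀⟩ := Finite.exists_min x
  have hmass : ∀ r : ι → ℝ, ∑ t, r t = 1 → ∑ t, (r t - δ) = 1 - Fintype.card ι * δ := by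
    intro r hr
    simp [Finset.sum_sub_distrib, hr]
  have hs : 0 ≤ 1 - Fintype.card ι * δ := by
    rw [← hmass p hp1]; exact Finset.sum_nonneg fun t _ => sub_nonneg.2 (hp t)
  -- the common mass `δ` of `p` and `q` cancels; what remains is pushed to the extremes of `x`
  have hupper : ∑ t, (p t - δ) * x t ≤ (1 - Fintype.card ι * δ) * x t₁ := by
    rw [← hmass p hp1, Finset.sum_mul]
    exact Finset.sum_le_sum fun t _ => mul_le_mul_of_nonneg_left (ht₁ t) (sub_nonneg.2 (hp t))
  have hlower : (1 - Fintype.card ι * δ) * x t₀ ≤ ∑ t, (q t - δ) * x t := by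
    rw [← hmass q hq1, Finset.sum_mul]
    exact Finset.sum_le_sum fun t _ => mul_le_mul_of_nonneg_left (ht₀ t) (sub_nonneg.2 (hq t))
  have hsplit : ∑ t, p t * x t - ∑ t, q t * x t
      = ∑ t, (p t - δ) * x t - ∑ t, (q t - δ) * x t := by
    simp only [sub_mul, Finset.sum_sub_distrib]; ring
  rw [hsplit]
  nlinarith [hx t₁ t₀]

lemma abs_sub_sum_mul_le {ι : Type*} [Fintype ι] {x π : ι → ℝ} {w : ℝ}
    (hx : ∀ t t', x t - x t' ≤ w) (hπ : ∀ t, 0 ≤ π t) (hπ1 : ∑ t, π t = 1) (s : ι) :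
    |x s - ∑ t, π t * x t| ≤ w := by
  have hs : x s = ∑ t, π t * x s := by rw [← Finset.sum_mul, hπ1, one_mul]
  rw [abs_sub_le_iff, hs, ← Finset.sum_sub_distrib, ← Finset.sum_sub_distrib]
  constructor <;>
  · calc _ ≤ ∑ t, π t * w := Finset.sum_le_sum fun t _ => by
          rw [← mul_sub]; exact mul_le_mul_of_nonneg_left (hx _ _) (hπ t)
      _ = w := by rw [← Finset.sum_mul, hπ1, one_mul]

variable {n : Type*}

def Nonneg (A : Matrix n n ℝ) : Prop := ∀ i j, 0 ≤ A i j

/-- `A` is rank one up to `w`: the ratio of any two rows, `j ↦ A i j / A i₀ j`, oscillates by at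
most `w`. -/
structure NearRankOne (ε w : ℝ) (A : Matrix n n ℝ) : Prop where
  pos : ∀ i j, 0 < A i j
  row_balanced : ∀ i j j', ε * A i j' ≤ A i j
  col_balanced : ∀ i i' j, ε * A i' j ≤ A i j
  div_sub_div_le : ∀ i i₀ j j', A i j / A i₀ j - A i j' / A i₀ j' ≤ w

lemma nearRankOne_of_mem_Icc {ε : ℝ} {S : Matrix n n ℝ} (hε : 0 < ε)
    (hS : ∀ i j, ε ≤ S i j ∧ S i j ≤ 1) : NearRankOne ε (1 / ε) S where
  pos i j := hε.trans_le (hS i j).1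
  row_balanced i j j' := (mul_le_of_le_one_right hε.le (hS i j').2).trans (hS i j).1
  col_balanced i i' j := (mul_le_of_le_one_right hε.le (hS i' j).2).trans (hS i j).1
  div_sub_div_le i i₀ j j' := by
    have h₁ : S i j / S i₀ j ≤ 1 / ε := div_le_div₀ zero_le_one (hS i j).2 hε (hS i₀ j).1
    have h₂ : 0 ≤ S i j' / S i₀ j' :=
      div_nonneg (hε.le.trans (hS i j').1) (hε.le.trans (hS i₀ j').1)
    linarith

lemma nonneg_one [DecidableEq n] : Nonneg (1 : Matrix n n ℝ) := fun i j => by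
  by_cases h : i = j <;> simp [one_apply, h]

variable [Fintype n]

lemma Nonneg.mul {A B : Matrix n n ℝ} (hA : Nonneg A) (hB : Nonneg B) : Nonneg (A * B) :=
  fun i j => Finset.sum_nonneg fun k _ => mul_nonneg (hA i k) (hB k j)

lemma Nonneg.mulVec_mono {A : Matrix n n ℝ} (hA : Nonneg A) {v w : n → ℝ} (h : v ≤ w) :
    A *ᵥ v ≤ A *ᵥ w :=
  fun i => Finset.sum_le_sum fun j _ => mul_le_mul_of_nonneg_left (h j) (hA i j)

lemma Nonneg.le_one {A : Matrix n n ℝ} (hA : Nonneg A) (h : A *ᵥ 1 ≤ 1) (i j : n) : A i j ≤ 1 :=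
  calc A i j ≤ ∑ k, A i k * 1 := by
        simpa using Finset.single_le_sum (fun k _ => hA i k) (Finset.mem_univ j)
    _ ≤ 1 := h i

lemma mulVec_one_apply (A : Matrix n n ℝ) (i : n) : (A *ᵥ 1) i = ∑ j, A i j := by
  simp [mulVec, dotProduct]

section NearRankOne

variable {ε w : ℝ} {A S : Matrix n n ℝ} {i₀ : n}

lemma sq_div_card_le_mul_div_mul_apply (hε : 0 < ε) (hA : ∀ j j', ε * A i₀ j' ≤ A i₀ j)
    (hA0 : ∀ j, 0 < A i₀ j) (hS : ∀ i j, ε ≤ S i j ∧ S i j ≤ 1) (t j : n) :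
    ε ^ 2 / Fintype.card n ≤ A i₀ t * S t j / (A * S) i₀ j := by
  have hpos : 0 < (A * S) i₀ j :=
    Finset.sum_pos (fun u _ => mul_pos (hA0 u) (hε.trans_le (hS u j).1)) ⟨t, Finset.mem_univ t⟩
  have hcard : (0 : ℝ) < Fintype.card n := Nat.cast_pos.2 (Fintype.card_pos_iff.2 ⟨t⟩)
  rw [div_le_div_iff₀ hcard hpos]
  have hrow : ε * (A * S) i₀ j ≤ Fintype.card n * A i₀ t :=
    calc ε * (A * S) i₀ j ≤ ∑ u : n, A i₀ t := by
          rw [mul_apply, Finset.mul_sum]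
          exact Finset.sum_le_sum fun u _ =>
            (mul_le_mul_of_nonneg_left (mul_le_of_le_one_right (hA0 u).le (hS u j).2) hε.le).trans
              (hA t u)
      _ = Fintype.card n * A i₀ t := by simp
  have := mul_le_mul_of_nonneg_left hrow hε.le
  have := mul_le_mul_of_nonneg_left (hS t j).1 (mul_nonneg hcard.le (hA0 t).le)
  nlinarith

lemma div_mul_apply_eq_sum (hA0 : ∀ t, A i₀ t ≠ 0) (i j : n) :
    (A * S) i j / (A * S) i₀ j = ∑ t, A i₀ t * S t j / (A * S) i₀ j * (A i t / A i₀ t) := by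
  rw [mul_apply, Finset.sum_div]
  refine Finset.sum_congr rfl fun t _ => ?_
  field_simp [hA0 t]

/-- Each ratio of two rows of `A * S` is an average of the same ratio for `A`, with weights at
least `ε² / card n`; so its oscillation contracts by the factor `1 - ε²`. -/
lemma NearRankOne.mul (hA : NearRankOne ε w A) (hε : 0 < ε)
    (hS : ∀ i j, ε ≤ S i j ∧ S i j ≤ 1) : NearRankOne ε ((1 - ε ^ 2) * w) (A * S) where
  pos i j := Finset.sum_pos (fun t _ => mul_pos (hA.pos i t) (hε.trans_le (hS t j).1))
    ⟨i, Finset.mem_univ _⟩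
  row_balanced i j j' :=
    calc ε * (A * S) i j' ≤ ε * ∑ t, A i t :=
          mul_le_mul_of_nonneg_left (Finset.sum_le_sum fun t _ =>
            mul_le_of_le_one_right (hA.pos i t).le (hS t j').2) hε.le
      _ ≤ (A * S) i j := by
          rw [Finset.mul_sum]
          exact Finset.sum_le_sum fun t _ => by
            rw [mul_comm]; exact mul_le_mul_of_nonneg_left (hS t j).1 (hA.pos i t).le
  col_balanced i i' j := by
    rw [mul_apply, mul_apply, Finset.mul_sum]
    exact Finset.sum_le_sum fun t _ => by
      rw [← mul_assoc]
      exact mul_le_mul_of_nonneg_right (hA.col_balanced i i' t) (hε.le.trans (hS t j).1)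
  div_sub_div_le i i₀ j j' := by
    have hcard : (Fintype.card n : ℝ) * (ε ^ 2 / Fintype.card n) = ε ^ 2 :=
      mul_div_cancel₀ _ (Nat.cast_ne_zero.2 (Fintype.card_pos_iff.2 ⟨i⟩).ne')
    have hsum : ∀ j, ∑ t, A i₀ t * S t j / (A * S) i₀ j = 1 := fun j => by
      rw [← Finset.sum_div, ← mul_apply, div_self]
      exact (Finset.sum_pos (fun t _ => mul_pos (hA.pos i₀ t) (hε.trans_le (hS t j).1))
        ⟨i, Finset.mem_univ _⟩).ne'
    have hweight := sq_div_card_le_mul_div_mul_apply hε (hA.row_balanced i₀) (hA.pos i₀) hS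
    rw [div_mul_apply_eq_sum (fun t => (hA.pos i₀ t).ne'),
      div_mul_apply_eq_sum (fun t => (hA.pos i₀ t).ne'), ← hcard]
    exact sum_mul_sub_sum_mul_le (fun t t' => hA.div_sub_div_le i i₀ t t') (hweight · j)
      (hweight · j') (hsum j) (hsum j')

lemma NearRankOne.abs_sub_mulVec_one_mul_le (hA : NearRankOne ε w A) (hε : 0 < ε)
    {N : Matrix n n ℝ} (hN : Nonneg N) (hle : ∀ i j, (N * A) i j ≤ 1) (i i₀ j : n) :
    |(N * A) i j - ((N * A) *ᵥ 1) i * (A i₀ j / ∑ j', A i₀ j')| ≤ w / ε := by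
  set σ := ∑ j', A i₀ j'
  have hσ : 0 < σ := Finset.sum_pos (fun j' _ => hA.pos i₀ j') ⟨j, Finset.mem_univ _⟩
  set y : n → ℝ := fun j => ∑ c, N i c * (A c j / A i₀ j)
  set T := ∑ c, N i c
  have hNA : ∀ j, (N * A) i j = A i₀ j * y j := fun j => by
    rw [mul_apply, Finset.mul_sum]
    refine Finset.sum_congr rfl fun c _ => ?_
    field_simp [(hA.pos i₀ j).ne']
  have hy : ∀ j j', y j - y j' ≤ T * w := fun j j' => by
    rw [← Finset.sum_sub_distrib, Finset.sum_mul]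
    exact Finset.sum_le_sum fun c _ => by
      rw [← mul_sub]; exact mul_le_mul_of_nonneg_left (hA.div_sub_div_le c i₀ j j') (hN i c)
  have hπ1 : ∑ t, A i₀ t / σ = 1 := by rw [← Finset.sum_div, div_self hσ.ne']
  have hrow : (N * A) i j - ((N * A) *ᵥ 1) i * (A i₀ j / σ)
      = A i₀ j * (y j - ∑ t, A i₀ t / σ * y t) := by
    simp only [mulVec_one_apply, hNA, mul_sub, Finset.sum_mul, Finset.mul_sum]
    congr 1
    refine Finset.sum_congr rfl fun t _ => ?_
    field_simp
  -- `N` is controlled only through `N * A ≤ 1`, by the column balance of `A`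
  have hT : A i₀ j * T ≤ 1 / ε := by
    rw [le_div_iff₀ hε]
    calc A i₀ j * T * ε = ∑ c, N i c * (ε * A i₀ j) := by
          rw [Finset.mul_sum, Finset.sum_mul]
          exact Finset.sum_congr rfl fun c _ => by ring
      _ ≤ (N * A) i j := Finset.sum_le_sum fun c _ =>
          mul_le_mul_of_nonneg_left (hA.col_balanced c i₀ j) (hN i c)
      _ ≤ 1 := hle i j
  have hw : 0 ≤ w := by simpa using hA.div_sub_div_le i i j j
  rw [hrow, abs_mul, abs_of_pos (hA.pos i₀ j)]
  calc A i₀ j * |y j - _| ≤ A i₀ j * (T * w) :=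
        mul_le_mul_of_nonneg_left
          (abs_sub_sum_mul_le hy (fun j' => div_nonneg (hA.pos i₀ j').le hσ.le) hπ1 j)
          (hA.pos i₀ j).le
    _ = A i₀ j * T * w := by ring
    _ ≤ 1 / ε * w := mul_le_mul_of_nonneg_right hT hw
    _ = w / ε := by ring

end NearRankOne

variable [DecidableEq n]

lemma Nonneg.pow {A : Matrix n n ℝ} (hA : Nonneg A) (k : ℕ) : Nonneg (A ^ k) := by
  induction k with
  | zero => exact nonneg_one
  | succ k ih => rw [pow_succ]; exact ih.mul hA

lemma norm_lt_of_rowSum_lt {A : Matrix n n ℝ} {c : ℝ} (hc : 0 < c) (h : ∀ i, ∑ j, |A i j| < c) :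
    ‖A‖ < c := by
  lift c to NNReal using hc.le
  rw [linfty_opNorm_def, NNReal.coe_lt_coe, Finset.sup_lt_iff (by exact_mod_cast hc)]
  intro i _
  rw [← NNReal.coe_lt_coe]
  push_cast
  simpa using h i

lemma Nonneg.inv_one_sub {A : Matrix n n ℝ} (hA : Nonneg A) (h : ‖A‖ < 1) : Nonneg (1 - A)⁻¹ := by
  have hsum := hasSum_geom_series_inverse A h
  rw [← nonsing_inv_eq_ringInverse] at hsum
  exact fun i j => (Pi.hasSum.1 (Pi.hasSum.1 hsum i) j).nonneg fun k => hA.pow k i j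

lemma inv_one_sub_eq_one_add_mul {X : Matrix n n ℝ} (hX : IsUnit (1 - X)) :
    (1 - X)⁻¹ = 1 + X * (1 - X)⁻¹ := by
  have h := mul_nonsing_inv (1 - X) ((isUnit_iff_isUnit_det _).1 hX)
  rw [sub_mul, Matrix.one_mul] at h
  exact sub_eq_iff_eq_add.mp h

lemma inv_one_sub_eq_one_add_mul' {X : Matrix n n ℝ} (hX : IsUnit (1 - X)) :
    (1 - X)⁻¹ = 1 + (1 - X)⁻¹ * X := by
  have h := nonsing_inv_mul (1 - X) ((isUnit_iff_isUnit_det _).1 hX)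
  rw [mul_sub, Matrix.mul_one] at h
  exact sub_eq_iff_eq_add.mp h

lemma isUnit_one_sub_of_norm_pow_lt_one {R : Matrix n n ℝ} {l : ℕ} (h : ‖R ^ l‖ < 1) :
    IsUnit (1 - R) :=
  isUnit_of_mul_isUnit_left (y := ∑ i ∈ Finset.range l, R ^ i) <| by
    rw [mul_neg_geom_sum]; exact isUnit_one_sub_of_norm_lt_one h

structure Admissible (ε : ℝ) (P Q R : Matrix n n ℝ) : Prop where
  isUnit_one_sub : IsUnit (1 - R)
  mulVec_one : (P + Q) *ᵥ 1 = (1 - R) *ᵥ 1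
  le_inv_mul_P : ∀ i j, ε ≤ ((1 - R)⁻¹ * P) i j
  nonneg_inv_mul_Q : Nonneg ((1 - R)⁻¹ * Q)

namespace Admissible

variable {ε : ℝ} {P Q R C : Matrix n n ℝ}

lemma mono {ε' : ℝ} (h : Admissible ε P Q R) (hε : ε' ≤ ε) : Admissible ε' P Q R :=
  { h with le_inv_mul_P := fun i j => hε.trans (h.le_inv_mul_P i j) }

variable (h : Admissible ε P Q R)
include h

lemma mulVec_one_add :
    ((1 - R)⁻¹ * P) *ᵥ 1 + ((1 - R)⁻¹ * Q) *ᵥ 1 = 1 := by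
  rw [← mulVec_mulVec, ← mulVec_mulVec, ← mulVec_add, ← add_mulVec, h.mulVec_one, mulVec_mulVec,
    nonsing_inv_mul _ ((isUnit_iff_isUnit_det _).1 h.isUnit_one_sub), one_mulVec]

lemma one_sub_sub_mul_eq : 1 - R - Q * C = (1 - R) * (1 - (1 - R)⁻¹ * Q * C) := by
  rw [mul_sub, mul_one, ← Matrix.mul_assoc, ← Matrix.mul_assoc,
    mul_nonsing_inv _ ((isUnit_iff_isUnit_det _).1 h.isUnit_one_sub), Matrix.one_mul]

lemma inv_one_sub_sub_mul_mul (M : Matrix n n ℝ) :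
    (1 - R - Q * C)⁻¹ * M = (1 - (1 - R)⁻¹ * Q * C)⁻¹ * ((1 - R)⁻¹ * M) := by
  rw [h.one_sub_sub_mul_eq, Matrix.mul_inv_rev, Matrix.mul_assoc]

variable (hε : 0 < ε) (hC : Nonneg C) (hC1 : C *ᵥ 1 ≤ 1)
include hε hC hC1

lemma norm_inv_mul_Q_mul_lt_one : ‖(1 - R)⁻¹ * Q * C‖ < 1 := by
  refine norm_lt_of_rowSum_lt one_pos fun i => ?_
  have hGC := h.nonneg_inv_mul_Q.mul hC
  have hH : ε ≤ (((1 - R)⁻¹ * P) *ᵥ 1) i := by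
    rw [mulVec_one_apply]
    exact (h.le_inv_mul_P i i).trans <| Finset.single_le_sum
      (fun j _ => hε.le.trans (h.le_inv_mul_P i j)) (Finset.mem_univ i)
  have hsum := congrFun h.mulVec_one_add i
  simp only [Pi.add_apply, Pi.one_apply] at hsum
  calc ∑ j, |((1 - R)⁻¹ * Q * C) i j| = (((1 - R)⁻¹ * Q) *ᵥ (C *ᵥ 1)) i := by
        simp only [mulVec_mulVec, mulVec_one_apply, abs_of_nonneg (hGC i _)]
    _ ≤ (((1 - R)⁻¹ * Q) *ᵥ 1) i := h.nonneg_inv_mul_Q.mulVec_mono hC1 i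
    _ < 1 := by linarith

lemma isUnit_one_sub_sub_mul : IsUnit (1 - R - Q * C) := by
  rw [h.one_sub_sub_mul_eq]
  exact h.isUnit_one_sub.mul
    (isUnit_one_sub_of_norm_lt_one (h.norm_inv_mul_Q_mul_lt_one hε hC hC1))

lemma nonneg_inv_one_sub_mul : Nonneg (1 - (1 - R)⁻¹ * Q * C)⁻¹ :=
  (h.nonneg_inv_mul_Q.mul hC).inv_one_sub (h.norm_inv_mul_Q_mul_lt_one hε hC hC1)

lemma nonneg_inv_one_sub_sub_mul_mul_Q : Nonneg ((1 - R - Q * C)⁻¹ * Q) := by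
  rw [h.inv_one_sub_sub_mul_mul]
  exact (h.nonneg_inv_one_sub_mul hε hC hC1).mul h.nonneg_inv_mul_Q

lemma le_inv_one_sub_sub_mul_mul_P (i j : n) : ε ≤ ((1 - R - Q * C)⁻¹ * P) i j := by
  have hX := h.norm_inv_mul_Q_mul_lt_one hε hC hC1
  have hK := h.nonneg_inv_one_sub_mul hε hC hC1
  have hH : Nonneg ((1 - R)⁻¹ * P) := fun i j => hε.le.trans (h.le_inv_mul_P i j)
  rw [h.inv_one_sub_sub_mul_mul, inv_one_sub_eq_one_add_mul (isUnit_one_sub_of_norm_lt_one hX),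
    Matrix.add_mul, Matrix.one_mul, Matrix.add_apply, Matrix.mul_assoc]
  exact le_add_of_le_of_nonneg (h.le_inv_mul_P i j)
    ((h.nonneg_inv_mul_Q.mul hC).mul (hK.mul hH) i j)

lemma inv_one_sub_sub_mul_mul_P_mulVec_one_le : ((1 - R - Q * C)⁻¹ * P) *ᵥ 1 ≤ 1 := by
  set G := (1 - R)⁻¹ * Q
  set K := (1 - G * C)⁻¹
  have hX := h.norm_inv_mul_Q_mul_lt_one hε hC hC1
  have hK1 : K *ᵥ 1 = 1 + K *ᵥ (G *ᵥ (C *ᵥ 1)) := by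
    have hKX : K = 1 + K * (G * C) :=
      inv_one_sub_eq_one_add_mul' (isUnit_one_sub_of_norm_lt_one hX)
    conv_lhs => rw [hKX]
    rw [add_mulVec, one_mulVec, mulVec_mulVec, mulVec_mulVec, Matrix.mul_assoc K G C]
  have hmono : K *ᵥ (G *ᵥ (C *ᵥ 1)) ≤ K *ᵥ (G *ᵥ 1) :=
    (h.nonneg_inv_one_sub_mul hε hC hC1).mulVec_mono (h.nonneg_inv_mul_Q.mulVec_mono hC1)
  rw [h.inv_one_sub_sub_mul_mul, ← mulVec_mulVec, eq_sub_of_add_eq h.mulVec_one_add, mulVec_sub,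
    hK1]
  intro i
  simpa using hmono i

end Admissible

section Recursion

variable {ε : ℝ} {P Q R : ℕ → Matrix n n ℝ}

def IsSolution (P Q R χ : ℕ → Matrix n n ℝ) : Prop :=
  ∀ k, 1 ≤ k → χ (k + 1) = (1 - R k - Q k * χ k)⁻¹ * P k

/-- The solution with `phi P Q R 1 = 0`; its value at `0` plays no role. -/
noncomputable def phi (P Q R : ℕ → Matrix n n ℝ) : ℕ → Matrix n n ℝ
  | 0 => 0
  | 1 => 0
  | k + 2 => (1 - R (k + 1) - Q (k + 1) * phi P Q R (k + 1))⁻¹ * P (k + 1)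

/-- `phiProd φ k = φ 2 * φ 3 * ⋯ * φ (k + 1)`. -/
def phiProd (φ : ℕ → Matrix n n ℝ) : ℕ → Matrix n n ℝ
  | 0 => 1
  | k + 1 => phiProd φ k * φ (k + 2)

lemma isSolution_phi : IsSolution P Q R (phi P Q R) := by
  rintro (_ | k) hk
  · omega
  · rfl

variable (hadm : ∀ k, Admissible ε (P k) (Q k) (R k)) (hε : 0 < ε)
include hadm hε

lemma phi_nonneg_mulVec_one_le : ∀ k, Nonneg (phi P Q R k) ∧ phi P Q R k *ᵥ 1 ≤ 1
  | 0 | 1 => ⟨fun _ _ => le_rfl, by simp [phi]⟩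
  | k + 2 =>
    have ih := phi_nonneg_mulVec_one_le (k + 1)
    ⟨fun i j => hε.le.trans ((hadm _).le_inv_one_sub_sub_mul_mul_P hε ih.1 ih.2 i j),
      (hadm _).inv_one_sub_sub_mul_mul_P_mulVec_one_le hε ih.1 ih.2⟩

lemma phi_mem_Icc (k : ℕ) (i j : n) :
    ε ≤ phi P Q R (k + 2) i j ∧ phi P Q R (k + 2) i j ≤ 1 := by
  have ih := phi_nonneg_mulVec_one_le hadm hε (k + 1)
  have hk := phi_nonneg_mulVec_one_le hadm hε (k + 2)
  exact ⟨(hadm _).le_inv_one_sub_sub_mul_mul_P hε ih.1 ih.2 i j, hk.1.le_one hk.2 i j⟩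

lemma nearRankOne_phiProd :
    ∀ k, NearRankOne ε ((1 - ε ^ 2) ^ k / ε) (phiProd (phi P Q R) (k + 1))
  | 0 => by simpa [phiProd] using nearRankOne_of_mem_Icc hε (phi_mem_Icc hadm hε 0)
  | k + 1 => by
    rw [pow_succ, mul_comm, mul_div_assoc]
    exact (nearRankOne_phiProd k).mul hε (phi_mem_Icc hadm hε (k + 1))

variable {χ : ℕ → Matrix n n ℝ} (hχ : IsSolution P Q R χ) (hχ0 : ∀ k, Nonneg (χ k))
include hχ hχ0

lemma sub_phi_succ_eq (hχ1 : ∀ k, χ k *ᵥ 1 ≤ 1) {k : ℕ} (hk : 1 ≤ k) :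
    χ (k + 1) - phi P Q R (k + 1)
      = (1 - R k - Q k * χ k)⁻¹ * Q k * (χ k - phi P Q R k) * phi P Q R (k + 1) := by
  have hφ := phi_nonneg_mulVec_one_le hadm hε k
  rw [hχ k hk, isSolution_phi k hk, ← Matrix.sub_mul,
    inv_sub_inv (iff_of_true ((hadm k).isUnit_one_sub_sub_mul hε (hχ0 k) (hχ1 k))
      ((hadm k).isUnit_one_sub_sub_mul hε hφ.1 hφ.2))]
  simp only [sub_sub_sub_cancel_left, ← Matrix.mul_sub, Matrix.mul_assoc]

lemma exists_sub_phi_eq_mul_phiProd (hχ1 : ∀ k, χ k *ᵥ 1 ≤ 1) :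
    ∀ k, ∃ N, Nonneg N ∧ χ (k + 1) - phi P Q R (k + 1) = N * phiProd (phi P Q R) k
  | 0 => ⟨χ 1, hχ0 1, by simp [phi, phiProd]⟩
  | k + 1 => by
    obtain ⟨N, hN, hk⟩ := exists_sub_phi_eq_mul_phiProd hχ1 k
    refine ⟨(1 - R (k + 1) - Q (k + 1) * χ (k + 1))⁻¹ * Q (k + 1) * N,
      ((hadm _).nonneg_inv_one_sub_sub_mul_mul_Q hε (hχ0 _) (hχ1 _)).mul hN, ?_⟩
    rw [sub_phi_succ_eq hadm hε hχ hχ0 hχ1 (Nat.le_add_left 1 k), hk, phiProd]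
    simp only [Matrix.mul_assoc]

lemma abs_sub_phi_sub_le (hχ1 : ∀ k, χ k *ᵥ 1 = 1) (k : ℕ) (i j : n) :
    |(χ (k + 2) - phi P Q R (k + 2)) i j - (1 - phi P Q R (k + 2) *ᵥ 1) i *
        (phiProd (phi P Q R) (k + 1) i j / ∑ j', phiProd (phi P Q R) (k + 1) i j')|
      ≤ (1 - ε ^ 2) ^ k / ε / ε := by
  obtain ⟨N, hN, hΔ⟩ :=
    exists_sub_phi_eq_mul_phiProd hadm hε hχ hχ0 (fun k => (hχ1 k).le) (k + 1)
  have hφ0 := (phi_nonneg_mulVec_one_le hadm hε (k + 2)).1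
  have hle : ∀ i j, (χ (k + 2) - phi P Q R (k + 2)) i j ≤ 1 := fun i j => by
    rw [Matrix.sub_apply]; linarith [(hχ0 (k + 2)).le_one (hχ1 (k + 2)).le i j, hφ0 i j]
  have hrow : (χ (k + 2) - phi P Q R (k + 2)) *ᵥ 1 = 1 - phi P Q R (k + 2) *ᵥ 1 := by
    rw [sub_mulVec, hχ1]
  rw [← hrow, hΔ]
  exact (nearRankOne_phiProd hadm hε k).abs_sub_mulVec_one_mul_le hε hN (hΔ ▸ hle) i i j

end Recursion

theorem abs_sub_le_of_isSolution {ε : ℝ} {P Q R ψ ψ' : ℕ → Matrix n n ℝ}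
    (hadm : ∀ k, Admissible ε (P k) (Q k) (R k)) (hε : 0 < ε)
    (hψ : IsSolution P Q R ψ) (hψ0 : ∀ k, Nonneg (ψ k)) (hψ1 : ∀ k, ψ k *ᵥ 1 = 1)
    (hψ' : IsSolution P Q R ψ') (hψ'0 : ∀ k, Nonneg (ψ' k)) (hψ'1 : ∀ k, ψ' k *ᵥ 1 = 1)
    (k : ℕ) (i j : n) :
    |ψ (k + 2) i j - ψ' (k + 2) i j| ≤ 2 * ((1 - ε ^ 2) ^ k / ε / ε) := by
  have h := abs_sub_phi_sub_le hadm hε hψ hψ0 hψ1 k i j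
  have h' := abs_sub_phi_sub_le hadm hε hψ' hψ'0 hψ'1 k i j
  rw [Matrix.sub_apply, abs_le] at h h'
  rw [abs_le]
  constructor <;> linarith

section Fin

variable {m : ℕ}

lemma admissible_of_rowNorm_pow_le {l : ℕ} {ε : ℝ} {P Q R : Matrix (Fin m) (Fin m) ℝ}
    (hε : 0 < ε) (hsum : ∀ i, ∑ j, (P i j + Q i j + R i j) = 1) (hR : rowNorm (R ^ l) ≤ 1 - ε)
    (hP : ∀ i j, ε ≤ ((1 - R)⁻¹ * P) i j) (hQ : ∀ i j, ε ≤ ((1 - R)⁻¹ * Q) i j) :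
    Admissible ε P Q R where
  isUnit_one_sub := isUnit_one_sub_of_norm_pow_lt_one <| norm_lt_of_rowSum_lt one_pos fun i =>
    ((le_ciSup (Finite.bddAbove_range _) i).trans hR).trans_lt (by linarith)
  mulVec_one := funext fun i => by
    have := hsum i
    simp only [Finset.sum_add_distrib] at this
    simp only [mulVec_one_apply, Matrix.add_apply, Matrix.sub_apply, Finset.sum_add_distrib,
      Finset.sum_sub_distrib, one_apply, Finset.sum_ite_eq, Finset.mem_univ, if_true]
    linarith
  le_inv_mul_P := hP
  nonneg_inv_mul_Q i j := hε.le.trans (hQ i j)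

theorem _root_.IsStochastic.mulVec_one {S : Matrix (Fin m) (Fin m) ℝ} (h : IsStochastic S) :
    S *ᵥ 1 = 1 :=
  funext fun i => by rw [mulVec_one_apply, h.2 i]; rfl

lemma rowNorm_le {A : Matrix (Fin m) (Fin m) ℝ} {b : ℝ} (h : ∀ i j, |A i j| ≤ b) (hb : 0 ≤ b) :
    rowNorm A ≤ m * b :=
  Real.iSup_le (fun i => (Finset.sum_le_sum fun j _ => h i j).trans (by simp)) (by positivity)

end Fin

end MatrixRecursion

open MatrixRecursion in
theorem stmt_16_general (m l : ℕ) (ε : ℝ) (hε : 0 < ε) :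
    ∃ (C₁ c₀ : ℝ), 0 < C₁ ∧ 0 ≤ c₀ ∧ c₀ < 1 ∧
      ∀ (P Q R : ℕ → Matrix (Fin m) (Fin m) ℝ)
        (ψ ψ' : ℕ → Matrix (Fin m) (Fin m) ℝ),
        (∀ n, (∀ i j, 0 ≤ P n i j) ∧ (∀ i j, 0 ≤ Q n i j) ∧
          (∀ i j, 0 ≤ R n i j) ∧
          (∀ i, ∑ j, (P n i j + Q n i j + R n i j) = 1) ∧
          rowNorm (R n ^ l) ≤ 1 - ε ∧
          (∀ i j, ε ≤ ((1 - R n)⁻¹ * P n) i j) ∧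
          (∀ i j, ε ≤ ((1 - R n)⁻¹ * Q n) i j)) →
        (∀ n, IsStochastic (ψ n) ∧ IsStochastic (ψ' n)) →
        (∀ n, 1 ≤ n → ψ (n + 1) = (1 - R n - Q n * ψ n)⁻¹ * P n) →
        (∀ n, 1 ≤ n → ψ' (n + 1) = (1 - R n - Q n * ψ' n)⁻¹ * P n) →
        ∀ n, 1 ≤ n → rowNorm (ψ (n + 1) - ψ' (n + 1)) ≤ 2 * C₁ * c₀ ^ n := by
  -- the hypotheses persist when `ε` shrinks, and `δ ≤ 1 / 2` keeps the rate `1 - δ ^ 2` positive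
  set δ := min ε (1 / 2)
  have hδ : 0 < δ := lt_min hε one_half_pos
  have hc₀ : 0 < 1 - δ ^ 2 := by nlinarith [min_le_right ε (1 / 2)]
  refine ⟨(m + 1) / (δ ^ 2 * (1 - δ ^ 2)), 1 - δ ^ 2, by positivity, hc₀.le, by nlinarith, ?_⟩
  intro P Q R ψ ψ' hPQR hstoch hψ hψ' n hn
  have hadm : ∀ k, Admissible δ (P k) (Q k) (R k) := fun k =>
    let ⟨_, _, _, hsum, hR, hP, hQ⟩ := hPQR k
    (admissible_of_rowNorm_pow_le hε hsum hR hP hQ).mono (min_le_left _ _)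
  obtain ⟨k, rfl⟩ : ∃ k, n = k + 1 := ⟨n - 1, by omega⟩
  calc rowNorm (ψ (k + 1 + 1) - ψ' (k + 1 + 1)) ≤ m * (2 * ((1 - δ ^ 2) ^ k / δ / δ)) :=
        rowNorm_le (abs_sub_le_of_isSolution hadm hδ hψ (fun k => (hstoch k).1.1)
          (fun k => (hstoch k).1.mulVec_one) hψ' (fun k => (hstoch k).2.1)
          (fun k => (hstoch k).2.mulVec_one) k) (by positivity)
    _ ≤ (m + 1) * (2 * ((1 - δ ^ 2) ^ k / δ / δ)) := by gcongr; linarith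
    _ = 2 * ((m + 1) / (δ ^ 2 * (1 - δ ^ 2))) * (1 - δ ^ 2) ^ (k + 1) := by
        field_simp
        ring

/-- Two solutions of the recursion `ψ_{n+1} = (I - R_n - Q_n ψ_n)⁻¹ P_n` with
arbitrary stochastic initial conditions approach each other exponentially
fast, with constants depending only on `ε`, `l` and `m`. -/
theorem stmt_16 (m l : ℕ) (hm : 0 < m) (hl : 1 ≤ l) (ε : ℝ) (hε : 0 < ε) :
    ∃ (C₁ c₀ : ℝ), 0 < C₁ ∧ 0 ≤ c₀ ∧ c₀ < 1 ∧
      ∀ (P Q R : ℕ → Matrix (Fin m) (Fin m) ℝ)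
        (ψ ψ' : ℕ → Matrix (Fin m) (Fin m) ℝ),
        (∀ n, (∀ i j, 0 ≤ P n i j) ∧ (∀ i j, 0 ≤ Q n i j) ∧
          (∀ i j, 0 ≤ R n i j) ∧
          (∀ i, ∑ j, (P n i j + Q n i j + R n i j) = 1) ∧
          rowNorm (R n ^ l) ≤ 1 - ε ∧
          (∀ i j, ε ≤ ((1 - R n)⁻¹ * P n) i j) ∧
          (∀ i j, ε ≤ ((1 - R n)⁻¹ * Q n) i j)) →
        (∀ n, IsStochastic (ψ n) ∧ IsStochastic (ψ' n)) →
        (∀ n, 1 ≤ n → ψ (n + 1) = (1 - R n - Q n * ψ n)⁻¹ * P n) →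
        (∀ n, 1 ≤ n → ψ' (n + 1) = (1 - R n - Q n * ψ' n)⁻¹ * P n) →
        ∀ n, 1 ≤ n → rowNorm (ψ (n + 1) - ψ' (n + 1)) ≤ 2 * C₁ * c₀ ^ n :=
  stmt_16_general m l ε hε
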